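/- arXiv:1906.08867 — 6 statements merged into one kernel-verified Lean document; each statement's English description precedes it below -/
import Mathlib

section
/- Let δ > 0 and let Δ be a real number with |Δ| < δ. If V is a real random variable uniformly distributed on the interval [−δ, δ], then the probability of the event {|V| + |Δ − V| < δ} equals 1/2. -/
open MeasureTheory

/-- The uniform probability measure on the interval `[a, b]`. -/
noncomputable def uniformIcc (a b : ℝ) : Measure ℝ :=
  (ENNReal.ofReal (b - a))⁻¹ • volume.restrict (Set.Icc a b)

/-- If `|Δ| < δ` and `V` is uniformly distributed on `[-δ, δ]`, then the probability
of the event `{|V| + |Δ - V| < δ}` equals `1/2`. -/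
theorem stmt0 {Ω : Type*} [MeasurableSpace Ω] (P : Measure Ω) [IsProbabilityMeasure P]
    (δ Δ : ℝ) (hδ : 0 < δ) (hΔ : |Δ| < δ)
    (V : Ω → ℝ) (hVmeas : Measurable V)
    (hVunif : Measure.map V P = uniformIcc (-δ) δ) :
    P {ω | |V ω| + |Δ - V ω| < δ} = 2⁻¹ := by
  obtain ⟨hΔ1, hΔ2⟩ := abs_lt.mp hΔ
  have hSet : {v : ℝ | |v| + |Δ - v| < δ} = Set.Ioo ((Δ - δ)/2) ((Δ + δ)/2) := by
    ext v
    simp only [Set.mem_setOf_eq, Set.mem_Ioo]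
    rcases abs_cases v with ⟨h1, h2⟩ | ⟨h1, h2⟩ <;>
      rcases abs_cases (Δ - v) with ⟨h3, h4⟩ | ⟨h3, h4⟩ <;>
      constructor <;> intro h <;> (try obtain ⟨ha, hb⟩ := h) <;>
      first
        | (constructor <;> linarith)
        | (rw [h1, h3]; linarith)
  have hmeas : MeasurableSet {v : ℝ | |v| + |Δ - v| < δ} := by
    rw [hSet]; exact measurableSet_Ioo
  have key : P {ω | |V ω| + |Δ - V ω| < δ}
      = Measure.map V P {v : ℝ | |v| + |Δ - v| < δ} := by
    rw [Measure.map_apply hVmeas hmeas]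
    rfl
  rw [key, hVunif, uniformIcc, hSet]
  have hsub : Set.Ioo ((Δ - δ)/2) ((Δ + δ)/2) ∩ Set.Icc (-δ) δ
      = Set.Ioo ((Δ - δ)/2) ((Δ + δ)/2) := by
    apply Set.inter_eq_left.mpr
    intro v hv
    obtain ⟨h1, h2⟩ := hv
    exact ⟨by linarith, by linarith⟩
  rw [Measure.smul_apply, Measure.restrict_apply measurableSet_Ioo, hsub,
    Real.volume_Ioo]
  have h1 : (Δ + δ)/2 - (Δ - δ)/2 = δ := by ring
  have h2 : δ - -δ = 2 * δ := by ring
  rw [h1, h2, smul_eq_mul, ENNReal.ofReal_mul (by norm_num : (0:ℝ) ≤ 2)]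
  rw [ENNReal.mul_inv (by simp) (by simp [ne_of_gt hδ]), mul_assoc,
    ENNReal.inv_mul_cancel (by simp [hδ]) (by simp), mul_one]
  norm_num
end

section
/- Let δ > 0, let Δ₀ be a real number with |Δ₀| < δ, let V₁, V₂, … be independent real random variables each uniformly distributed on [−δ, δ], and define recursively Δⱼ = Δⱼ₋₁ − Vⱼ for j ≥ 1. Then for every integer k ≥ 1, the probability of the event ⋂_{j=1}^{k} {|Vⱼ| + |Δⱼ| < δ} equals 2^{−k}. Equivalently, starting from a forced move, the run of consecutive forced moves in a dimension has length at least k with probability 2^{−(k−1)}. -/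
open MeasureTheory ProbabilityTheory

lemma setOf_abs_add_abs_sub_lt_eq_Ioo {δ x : ℝ} (hx : |x| < δ) :
    {v : ℝ | |v| + |x - v| < δ} = Set.Ioo ((x - δ) / 2) ((x + δ) / 2) := by
  obtain ⟨hx₁, hx₂⟩ := abs_lt.1 hx
  ext v
  simp only [Set.mem_ofPred_eq, Set.mem_Ioo]
  constructor
  · intro h
    constructor <;> cases abs_cases v <;> cases abs_cases (x - v) <;> linarith
  · rintro ⟨hlo, hhi⟩
    cases abs_cases v <;> cases abs_cases (x - v) <;> linarith

lemma uniformIcc_setOf_abs_add_abs_sub_lt {δ x : ℝ} (hx : |x| < δ) :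
    uniformIcc (-δ) δ {v | |v| + |x - v| < δ} = 2⁻¹ := by
  obtain ⟨hx₁, hx₂⟩ := abs_lt.1 hx
  have hδ : 0 < δ := by linarith
  have hsub : Set.Ioo ((x - δ) / 2) ((x + δ) / 2) ⊆ Set.Icc (-δ) δ :=
    fun v ⟨h₁, h₂⟩ => ⟨by linarith, by linarith⟩
  have hlen : (x + δ) / 2 - (x - δ) / 2 = δ := by ring
  have hwidth : δ - -δ = 2 * δ := by ring
  rw [setOf_abs_add_abs_sub_lt_eq_Ioo hx, uniformIcc, Measure.smul_apply,
    Measure.restrict_apply measurableSet_Ioo, Set.inter_eq_left.mpr hsub, Real.volume_Ioo, hlen,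
    hwidth, ENNReal.ofReal_mul zero_le_two, smul_eq_mul,
    ENNReal.mul_inv (by simp) (by simp), mul_assoc,
    ENNReal.inv_mul_cancel (ENNReal.ofReal_pos.mpr hδ).ne' ENNReal.ofReal_ne_top,
    mul_one, ENNReal.ofReal_ofNat]

section Freezing

variable {Ω β γ : Type*} {m : MeasurableSpace Ω} [mΩ : MeasurableSpace Ω]
  [MeasurableSpace β] [MeasurableSpace γ] {P : Measure Ω} [IsFiniteMeasure P] {X : Ω → γ}

lemma ProbabilityTheory.IndepFun.measure_preimage_eq_lintegral {Y : Ω → β}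
    (h : IndepFun Y X P) (hY : Measurable Y) (hX : Measurable X)
    {S : Set (β × γ)} (hS : MeasurableSet S) :
    P ((fun ω => (Y ω, X ω)) ⁻¹' S) = ∫⁻ ω, P.map X (Prod.mk (Y ω) ⁻¹' S) ∂P := by
  rw [← Measure.map_apply (hY.prodMk hX) hS,
    h.map_prod_eq_prod_map_map hY.aemeasurable hX.aemeasurable, Measure.prod_apply hS,
    lintegral_map (measurable_measure_prodMk_left hS) hY]

lemma ProbabilityTheory.Indep.measure_inter_preimage_eq_setLIntegral
    (hm : m ≤ mΩ) (hind : Indep m (MeasurableSpace.comap X inferInstance) P) (hX : Measurable X)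
    {D : Ω → β} (hD : Measurable[m] D) {A : Set Ω} (hA : MeasurableSet[m] A)
    {S : Set (β × γ)} (hS : MeasurableSet S) :
    P (A ∩ {ω | (D ω, X ω) ∈ S}) = ∫⁻ ω in A, P.map X (Prod.mk (D ω) ⁻¹' S) ∂P := by
  -- Membership in `A` becomes a `Prop`-valued coordinate, turning the event into a preimage.
  set Y : Ω → Prop × β := fun ω => (ω ∈ A, D ω)
  have hYm : Measurable[m] Y := ((@measurable_mem _ _ m).2 hA).prodMk hD
  have hYX : IndepFun Y X P :=
    (IndepFun_iff_Indep _ _ _).2 (indep_of_indep_of_le_left hind hYm.comap_le)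
  have hS' : MeasurableSet {p : (Prop × β) × γ | p.1.1 ∧ (p.1.2, p.2) ∈ S} :=
    (measurableSet_setOfPred.2 (measurable_fst.comp measurable_fst)).inter
      (hS.preimage ((measurable_snd.comp measurable_fst).prodMk measurable_snd))
  calc P (A ∩ {ω | (D ω, X ω) ∈ S})
      = ∫⁻ ω, P.map X (Prod.mk (Y ω) ⁻¹' {p | p.1.1 ∧ (p.1.2, p.2) ∈ S}) ∂P :=
        hYX.measure_preimage_eq_lintegral (hYm.mono hm le_rfl) hX hS'
    _ = ∫⁻ ω, A.indicator (fun ω => P.map X (Prod.mk (D ω) ⁻¹' S)) ω ∂P := by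
        congr 1 with ω
        by_cases hω : ω ∈ A <;> simp [Y, hω, Set.preimage]
    _ = ∫⁻ ω in A, P.map X (Prod.mk (D ω) ⁻¹' S) ∂P := lintegral_indicator (hm _ hA) _

end Freezing

lemma ProbabilityTheory.Indep.measure_inter_abs_add_abs_sub_lt {Ω : Type*}
    {m : MeasurableSpace Ω} [mΩ : MeasurableSpace Ω] {P : Measure Ω} [IsFiniteMeasure P]
    (hm : m ≤ mΩ) {δ : ℝ} {X D : Ω → ℝ} (hind : Indep m (MeasurableSpace.comap X inferInstance) P)
    (hX : Measurable X) (hlaw : P.map X = uniformIcc (-δ) δ) (hD : Measurable[m] D)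
    {A : Set Ω} (hA : MeasurableSet[m] A) (hDA : ∀ ω ∈ A, |D ω| < δ) :
    P (A ∩ {ω | |X ω| + |D ω - X ω| < δ}) = 2⁻¹ * P A :=
  calc P (A ∩ {ω | |X ω| + |D ω - X ω| < δ})
      = ∫⁻ ω in A, P.map X (Prod.mk (D ω) ⁻¹' {p : ℝ × ℝ | |p.2| + |p.1 - p.2| < δ}) ∂P :=
        hind.measure_inter_preimage_eq_setLIntegral hm hX hD hA
          (S := {p : ℝ × ℝ | |p.2| + |p.1 - p.2| < δ})
          (measurableSet_lt (by fun_prop) (by fun_prop))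
    _ = ∫⁻ _ in A, 2⁻¹ ∂P := setLIntegral_congr_fun (hm _ hA) fun ω hω => by
        rw [hlaw]; exact uniformIcc_setOf_abs_add_abs_sub_lt (hDA ω hω)
    _ = 2⁻¹ * P A := setLIntegral_const _ _

lemma ProbabilityTheory.iIndepFun.indep_natural {Ω ι β : Type*} [MeasurableSpace Ω]
    [Preorder ι] [TopologicalSpace β] [TopologicalSpace.MetrizableSpace β] [MeasurableSpace β]
    [BorelSpace β] {P : Measure Ω} {u : ι → Ω → β} (hu : ∀ i, StronglyMeasurable (u i))
    (h : iIndepFun u P) {i j : ι} (hij : ¬ j ≤ i) :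
    Indep (Filtration.natural u hu i) (MeasurableSpace.comap (u j) inferInstance) P := by
  have hpast_future : Disjoint (Set.Iic i) {j} := by simpa using hij
  exact indep_of_indep_of_le_right
    (indep_iSup_of_disjoint (fun k => (hu k).measurable.comap_le) h.iIndep hpast_future)
    (le_iSup₂ (f := fun k (_ : k ∈ ({j} : Set ι)) => MeasurableSpace.comap (u k) inferInstance)
      j rfl)

section ForcedRun

variable {Ω : Type*} (V Δ : ℕ → Ω → ℝ) (δ : ℝ)

def forcedRun (k : ℕ) : Set Ω := {ω | ∀ j, 1 ≤ j → j ≤ k → |V j ω| + |Δ j ω| < δ}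

lemma forcedRun_zero : forcedRun V Δ δ 0 = Set.univ := by
  ext ω
  simp only [forcedRun, Set.mem_ofPred_eq, Set.mem_univ, iff_true]
  omega

lemma forcedRun_succ (hrec : ∀ j, Δ (j + 1) = fun ω => Δ j ω - V (j + 1) ω) (k : ℕ) :
    forcedRun V Δ δ (k + 1) =
      forcedRun V Δ δ k ∩ {ω | |V (k + 1) ω| + |Δ k ω - V (k + 1) ω| < δ} := by
  ext ω
  have hstep : Δ (k + 1) ω = Δ k ω - V (k + 1) ω := congrFun (hrec k) ω
  simp only [forcedRun, Set.mem_inter_iff, Set.mem_ofPred_eq]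
  constructor
  · intro h
    refine ⟨fun j hj hjk => h j hj (by omega), ?_⟩
    rw [← hstep]
    exact h (k + 1) (by omega) le_rfl
  · rintro ⟨h, hlast⟩ j hj hjk
    rcases Nat.lt_or_eq_of_le hjk with hjk | rfl
    · exact h j hj (by omega)
    · rwa [hstep]

variable {V Δ δ}

lemma abs_lt_of_mem_forcedRun {ω : Ω} (h₀ : |Δ 0 ω| < δ) {k : ℕ}
    (hω : ω ∈ forcedRun V Δ δ k) : |Δ k ω| < δ := by
  cases k with
  | zero => exact h₀
  | succ k => linarith [hω (k + 1) (by omega) le_rfl, abs_nonneg (V (k + 1) ω)]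

lemma measurableSet_forcedRun {m : MeasurableSpace Ω} {k : ℕ}
    (hV : ∀ j ≤ k, Measurable[m] (V j)) (hΔ : ∀ j ≤ k, Measurable[m] (Δ j)) :
    MeasurableSet[m] (forcedRun V Δ δ k) := by
  simp only [forcedRun, Set.ofPred_forall]
  exact .iInter fun j => .iInter fun _ => .iInter fun hjk =>
    measurableSet_lt ((hV j hjk).abs.add (hΔ j hjk).abs) measurable_const

end ForcedRun

theorem stmt1_general {Ω : Type*} [MeasurableSpace Ω] (P : Measure Ω) [IsProbabilityMeasure P]
    (δ Δ₀ : ℝ) (hΔ₀ : |Δ₀| < δ)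
    (V : ℕ → Ω → ℝ) (hVmeas : ∀ j, Measurable (V j))
    (hindep : iIndepFun V P)
    (hVunif : ∀ j, Measure.map (V j) P = uniformIcc (-δ) δ)
    (Δ : ℕ → Ω → ℝ) (hΔ0 : Δ 0 = fun _ => Δ₀)
    (hrec : ∀ j, Δ (j + 1) = fun ω => Δ j ω - V (j + 1) ω)
    (k : ℕ) :
    P {ω | ∀ j, 1 ≤ j → j ≤ k → |V j ω| + |Δ j ω| < δ} = 2⁻¹ ^ k := by
  have hV : ∀ j, StronglyMeasurable (V j) := fun j => (hVmeas j).stronglyMeasurable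
  set ℱ := Filtration.natural V hV
  have hV_adapted : ∀ j, Measurable[ℱ j] (V j) :=
    fun j => (Filtration.stronglyAdapted_natural hV j).measurable
  have hΔ_adapted : ∀ j, Measurable[ℱ j] (Δ j) := by
    intro j
    induction j with
    | zero => rw [hΔ0]; exact measurable_const
    | succ j ih => rw [hrec]; exact (ih.mono (ℱ.mono j.le_succ) le_rfl).sub (hV_adapted _)
  have hrun_meas : ∀ k, MeasurableSet[ℱ k] (forcedRun V Δ δ k) := fun k =>
    measurableSet_forcedRun (fun j hj => (hV_adapted j).mono (ℱ.mono hj) le_rfl)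
      (fun j hj => (hΔ_adapted j).mono (ℱ.mono hj) le_rfl)
  have hΔ_lt : ∀ k, ∀ ω ∈ forcedRun V Δ δ k, |Δ k ω| < δ :=
    fun k ω => abs_lt_of_mem_forcedRun (by simpa [hΔ0] using hΔ₀)
  change P (forcedRun V Δ δ k) = 2⁻¹ ^ k
  induction k with
  | zero => simp [forcedRun_zero]
  | succ k ih =>
    have hindep_next := hindep.indep_natural hV (Nat.not_succ_le_self k)
    rw [forcedRun_succ V Δ δ hrec, hindep_next.measure_inter_abs_add_abs_sub_lt (ℱ.le k)
      (hVmeas _) (hVunif _) (hΔ_adapted k) (hrun_meas k) (hΔ_lt k), ih, pow_succ, mul_comm]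

/-- Let `|Δ₀| < δ`, let `V₁, V₂, …` be i.i.d. uniform on `[-δ, δ]`, and let
`Δⱼ = Δⱼ₋₁ - Vⱼ` for `j ≥ 1`. Then for every `k ≥ 1`, the probability of the event
`⋂_{j=1}^{k} {|Vⱼ| + |Δⱼ| < δ}` equals `2⁻ᵏ`. -/
theorem stmt1 {Ω : Type*} [MeasurableSpace Ω] (P : Measure Ω) [IsProbabilityMeasure P]
    (δ Δ₀ : ℝ) (hδ : 0 < δ) (hΔ₀ : |Δ₀| < δ)
    (V : ℕ → Ω → ℝ) (hVmeas : ∀ j, Measurable (V j))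
    (hindep : iIndepFun V P)
    (hVunif : ∀ j, Measure.map (V j) P = uniformIcc (-δ) δ)
    (Δ : ℕ → Ω → ℝ) (hΔ0 : Δ 0 = fun _ => Δ₀)
    (hrec : ∀ j, Δ (j + 1) = fun ω => Δ j ω - V (j + 1) ω)
    (k : ℕ) (hk : 1 ≤ k) :
    P {ω | ∀ j, 1 ≤ j → j ≤ k → |V j ω| + |Δ j ω| < δ} = 2⁻¹ ^ k :=
  stmt1_general P δ Δ₀ hΔ₀ V hVmeas hindep hVunif Δ hΔ0 hrec k
end

section
/- Fix N ≥ 1, δ > 0 and a real number G. Let X, V : ℕ → Fin N → ℝ describe the one-dimensional states of N particles at global steps t = 0, 1, 2, …, where at step t only particle p(t) = t mod N moves, i.e., for every particle m ≠ p(t) one has X_{t+1}(m) = X_t(m) and V_{t+1}(m) = V_t(m). Say step s is forced-eligible if |V_s(m)| + |G − X_s(m)| < δ for every particle m. If after particle p(t)'s move at step t its new contribution satisfies |V_{t+1}(p(t))| + |G − X_{t+1}(p(t))| ≥ δ, then no step s with t + 1 ≤ s ≤ t + N is forced-eligible. -/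
/-- Lockout phase of f-PSO: `N` particles move sequentially, at global step `t` only
particle `t % N` moves (all other particles keep their position and velocity).
If after the move of particle `t % N` at step `t` its new contribution
`|V| + |G - X|` is at least `δ`, then no step `s` with `t + 1 ≤ s ≤ t + N` is
forced-eligible, i.e. at no such step do all particles have contribution `< δ`. -/
theorem stmt3 (N : ℕ) (hN : 1 ≤ N) (δ G : ℝ) (hδ : 0 < δ)
    (X V : ℕ → Fin N → ℝ)
    (hfreeze : ∀ t : ℕ, ∀ m : Fin N, (m : ℕ) ≠ t % N →
      X (t + 1) m = X t m ∧ V (t + 1) m = V t m)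
    (t : ℕ)
    (hbig : ∀ m : Fin N, (m : ℕ) = t % N →
      δ ≤ |V (t + 1) m| + |G - X (t + 1) m|) :
    ∀ s, t + 1 ≤ s → s ≤ t + N → ¬ (∀ m : Fin N, |V s m| + |G - X s m| < δ) := by
  intro s hs1 hs2 hall
  set m : Fin N := ⟨t % N, Nat.mod_lt _ hN⟩ with hm
  have hmn : (m : ℕ) = t % N := rfl
  -- the state of m is frozen from t+1 up to s
  have hfrozen : ∀ u, t + 1 ≤ u → u ≤ t + N → X u m = X (t + 1) m ∧ V u m = V (t + 1) m := by
    intro u hu1 hu2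
    induction u with
    | zero => omega
    | succ v ih =>
      rcases Nat.eq_or_lt_of_le hu1 with h | h
      · simp [← h]
      · have hv1 : t + 1 ≤ v := by omega
        have hv2 : v ≤ t + N := by omega
        have hne : (m : ℕ) ≠ v % N := by
          rw [hmn]
          intro heq
          have : v % N = t % N := heq.symm
          have hdvd : N ∣ v - t := (Nat.modEq_iff_dvd' (by omega)).mp this.symm
          have h1 : 1 ≤ v - t := by omega
          have h2 : v - t < N := by omega
          exact absurd (Nat.le_of_dvd (by omega) hdvd) (by omega)
        obtain ⟨hx, hv⟩ := hfreeze v m hne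
        obtain ⟨ihx, ihv⟩ := ih hv1 hv2
        exact ⟨hx.trans ihx, hv.trans ihv⟩
  obtain ⟨hx, hv⟩ := hfrozen s hs1 hs2
  have := hall m
  rw [hx, hv] at this
  exact absurd (hbig m hmn) (not_le.mpr this)
end

section
/- Let δ > 0, χ > 0, c₁ > 0, c₂ > 0 and let Δ ∈ ℝ. Let V, r, s be independent random variables with V uniformly distributed on [−δ, δ] and r, s each uniformly distributed on [0, 1]. Define the new velocity V′ = χ·V + (c₁·r + c₂·s)·Δ and the new potential contribution φ′ = |V′| + |Δ − V′|. Then ℙ(φ′ ≥ δ) ≥ (1 − 1/(2χ)) · (1/2). -/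
/-! By the triangle inequality, `φ' ≥ |V' - (Δ - V')| = |2χV + (2T - 1)Δ|` with `T = c₁r + c₂s`,
so `φ' < δ` confines `V` to an open interval of length `δ / χ` determined by `T`. As `V` is
independent of `T` and has density `1 / (2δ)`, this has probability at most `1 / (2χ)`. Hence
`ℙ(φ' ≥ δ) ≥ 1 - 1 / (2χ)`, which dominates the claimed bound. -/

open MeasureTheory ProbabilityTheory

lemma uniformIcc_apply_le (a b : ℝ) (s : Set ℝ) :
    uniformIcc a b s ≤ (ENNReal.ofReal (b - a))⁻¹ * volume s := by
  rw [uniformIcc, Measure.smul_apply, smul_eq_mul]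
  exact mul_le_mul_right (Measure.restrict_apply_le _ _) _

lemma setOf_abs_mul_add_lt_eq_Ioo {k : ℝ} (hk : 0 < k) (w δ : ℝ) :
    {v : ℝ | |k * v + w| < δ} = Set.Ioo ((-δ - w) / k) ((δ - w) / k) := by
  ext v
  simp only [Set.mem_ofPred_eq, abs_lt, Set.mem_Ioo, div_lt_iff₀ hk, lt_div_iff₀ hk]
  constructor <;> rintro ⟨h₁, h₂⟩ <;> constructor <;> linarith

lemma volume_setOf_abs_mul_add_lt {k : ℝ} (hk : 0 < k) (w δ : ℝ) :
    volume {v : ℝ | |k * v + w| < δ} = ENNReal.ofReal (2 * δ / k) := by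
  rw [setOf_abs_mul_add_lt_eq_Ioo hk, Real.volume_Ioo]
  congr 1
  field_simp
  ring

lemma uniformIcc_setOf_abs_mul_add_lt_le {δ k : ℝ} (hδ : 0 < δ) (hk : 0 < k) (w : ℝ) :
    uniformIcc (-δ) δ {v | |k * v + w| < δ} ≤ ENNReal.ofReal (1 / k) := by
  calc uniformIcc (-δ) δ {v | |k * v + w| < δ}
      ≤ (ENNReal.ofReal (2 * δ))⁻¹ * ENNReal.ofReal (2 * δ / k) := by
        have h := uniformIcc_apply_le (-δ) δ {v | |k * v + w| < δ}
        rwa [sub_neg_eq_add, ← two_mul, volume_setOf_abs_mul_add_lt hk] at h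
    _ = ENNReal.ofReal (1 / k) := by
        rw [← ENNReal.ofReal_inv_of_pos (by positivity), ← ENNReal.ofReal_mul (by positivity)]
        congr 1
        field_simp

lemma ProbabilityTheory.IndepFun.measure_preimage_prodMk_le {Ω α β : Type*}
    [MeasurableSpace Ω] [MeasurableSpace α] [MeasurableSpace β] {P : Measure Ω} [IsProbabilityMeasure P]
    {X : Ω → α} {Y : Ω → β} (hXY : IndepFun X Y P) (hX : AEMeasurable X P)
    (hY : AEMeasurable Y P) {S : Set (α × β)} (hS : MeasurableSet S) {ε : ENNReal}
    (hε : ∀ y, P.map X ((fun x => (x, y)) ⁻¹' S) ≤ ε) :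
    P ((fun ω => (X ω, Y ω)) ⁻¹' S) ≤ ε := by
  have : IsProbabilityMeasure (P.map Y) := Measure.isProbabilityMeasure_map hY
  rw [← Measure.map_apply_of_aemeasurable (hX.prodMk hY) hS,
    (indepFun_iff_map_prod_eq_prod_map_map hX hY).mp hXY, Measure.prod_apply_symm hS]
  calc ∫⁻ y, P.map X ((fun x => (x, y)) ⁻¹' S) ∂P.map Y ≤ ∫⁻ _, ε ∂P.map Y := lintegral_mono hε
    _ = ε := by simp

lemma abs_two_mul_sub_le_abs_add_abs_sub (x Δ : ℝ) : |2 * x - Δ| ≤ |x| + |Δ - x| := by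
  simpa [two_mul, sub_sub_eq_add_sub, add_sub_assoc] using abs_sub x (Δ - x)

theorem stmt4_general {Ω : Type*} [MeasurableSpace Ω] (P : Measure Ω) [IsProbabilityMeasure P]
    (δ χ c₁ c₂ Δ : ℝ) (hδ : 0 < δ) (hχ : 0 < χ)
    (V r s : Ω → ℝ) (hVmeas : Measurable V) (hrmeas : Measurable r) (hsmeas : Measurable s)
    (hindep : iIndepFun ![V, r, s] P)
    (hVunif : Measure.map V P = uniformIcc (-δ) δ) :
    (1 - 1 / (2 * χ)) * (1 / 2) ≤
      (P {ω | δ ≤ |χ * V ω + (c₁ * r ω + c₂ * s ω) * Δ| +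
        |Δ - (χ * V ω + (c₁ * r ω + c₂ * s ω) * Δ)|}).toReal := by
  set T : Ω → ℝ := fun ω => c₁ * r ω + c₂ * s ω
  have hVT : IndepFun V T P := by
    have h := hindep.indepFun_prodMk (fun i => by fin_cases i <;> assumption) 1 2 0
      (by decide) (by decide)
    exact (h.comp (φ := fun p : ℝ × ℝ => c₁ * p.1 + c₂ * p.2) (by fun_prop) measurable_id).symm
  set S : Set (ℝ × ℝ) := {p | |2 * χ * p.1 + (2 * p.2 - 1) * Δ| < δ}
  have hS : MeasurableSet S := measurableSet_lt (by fun_prop) measurable_const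
  set O := {ω | δ ≤ |χ * V ω + T ω * Δ| + |Δ - (χ * V ω + T ω * Δ)|}
  have hO : MeasurableSet O := measurableSet_le measurable_const (by fun_prop)
  have hOc : P Oᶜ ≤ ENNReal.ofReal (1 / (2 * χ)) := by
    calc P Oᶜ ≤ P ((fun ω => (V ω, T ω)) ⁻¹' S) := by
          refine measure_mono fun ω hω => ?_
          have h := abs_two_mul_sub_le_abs_add_abs_sub (χ * V ω + T ω * Δ) Δ
          simp only [O, S, Set.mem_compl_iff, Set.mem_ofPred_eq, not_le, Set.mem_preimage] at hω ⊢
          rw [show 2 * χ * V ω + (2 * T ω - 1) * Δ = 2 * (χ * V ω + T ω * Δ) - Δ by ring]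
          exact h.trans_lt hω
      _ ≤ _ := hVT.measure_preimage_prodMk_le hVmeas.aemeasurable (by fun_prop) hS
          fun t => hVunif ▸
            uniformIcc_setOf_abs_mul_add_lt_le hδ (by positivity) ((2 * t - 1) * Δ)
  have hOreal : 1 - 1 / (2 * χ) ≤ P.real O := by
    have := ENNReal.toReal_le_of_le_ofReal (by positivity) hOc
    rw [← measureReal_def, probReal_compl_eq_one_sub hO] at this
    linarith
  rw [← measureReal_def]
  rcases le_or_gt 0 (1 - 1 / (2 * χ)) with h | h <;>
    linarith [measureReal_nonneg (μ := P) (s := O)]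

/-- Lemma 4 of the paper: with `V` uniform on `[-δ, δ]` and `r, s` uniform on `[0, 1]`,
all independent, the new velocity `V' = χ·V + (c₁·r + c₂·s)·Δ` and new potential
contribution `φ' = |V'| + |Δ - V'|` satisfy `ℙ(φ' ≥ δ) ≥ (1 - 1/(2χ))·(1/2)`. -/
theorem stmt4 {Ω : Type*} [MeasurableSpace Ω] (P : Measure Ω) [IsProbabilityMeasure P]
    (δ χ c₁ c₂ Δ : ℝ) (hδ : 0 < δ) (hχ : 0 < χ) (hc₁ : 0 < c₁) (hc₂ : 0 < c₂)
    (V r s : Ω → ℝ) (hVmeas : Measurable V) (hrmeas : Measurable r) (hsmeas : Measurable s)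
    (hindep : iIndepFun ![V, r, s] P)
    (hVunif : Measure.map V P = uniformIcc (-δ) δ)
    (hrunif : Measure.map r P = uniformIcc 0 1)
    (hsunif : Measure.map s P = uniformIcc 0 1) :
    (1 - 1 / (2 * χ)) * (1 / 2) ≤
      (P {ω | δ ≤ |χ * V ω + (c₁ * r ω + c₂ * s ω) * Δ| +
        |Δ - (χ * V ω + (c₁ * r ω + c₂ * s ω) * Δ)|}).toReal :=
  stmt4_general P δ χ c₁ c₂ Δ hδ hχ V r s hVmeas hrmeas hsmeas hindep hVunif
end

section
/- Let δ > 0 and let Δ be a real number with 0 < |Δ| < δ. If V is a real random variable uniformly distributed on [−δ, δ], then ℙ( |V| + |Δ − V| < δ and V·Δ ≥ 0 ) = (δ + |Δ|)/(4δ). -/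
/-! For `Δ > 0` the event is the interval `[0, (δ + Δ)/2)`, because for `v ≥ 0` the potential
`|v| + |Δ - v|` equals `max Δ (2v - Δ)`; for `Δ < 0` it is the mirror image of that interval.
Either way it is a subset of `[-δ, δ]` of length `(δ + |Δ|)/2`, which the uniform law weighs
by `1/(2δ)`. -/

open MeasureTheory

def sameSideDescent (δ Δ : ℝ) : Set ℝ :=
  {v | |v| + |Δ - v| < δ ∧ 0 ≤ v * Δ}

lemma measurableSet_sameSideDescent (δ Δ : ℝ) : MeasurableSet (sameSideDescent δ Δ) := by
  unfold sameSideDescent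
  measurability

lemma sameSideDescent_subset_Icc (δ Δ : ℝ) : sameSideDescent δ Δ ⊆ Set.Icc (-δ) δ := fun v hv =>
  abs_le.1 (by linarith [hv.1, abs_nonneg (Δ - v)])

lemma sameSideDescent_neg (δ Δ : ℝ) : sameSideDescent δ (-Δ) = -sameSideDescent δ Δ := by
  ext v
  simp only [sameSideDescent, Set.mem_neg, Set.mem_ofPred_eq, abs_neg, mul_neg, neg_mul,
    show -Δ - v = -(Δ - -v) by ring]

lemma sameSideDescent_eq_Ico {δ Δ : ℝ} (hΔ0 : 0 < Δ) (hΔ : Δ < δ) :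
    sameSideDescent δ Δ = Set.Ico 0 ((δ + Δ) / 2) := by
  ext v
  simp only [sameSideDescent, Set.mem_ofPred_eq, Set.mem_Ico]
  constructor
  · rintro ⟨hlt, hsign⟩
    exact ⟨nonneg_of_mul_nonneg_left hsign hΔ0,
      by linarith [le_abs_self v, neg_le_abs (Δ - v)]⟩
  · rintro ⟨hv, hvlt⟩
    have : |Δ - v| < δ - v := abs_sub_lt_iff.2 ⟨by linarith, by linarith⟩
    exact ⟨by rw [abs_of_nonneg hv]; linarith, mul_nonneg hv hΔ0.le⟩

lemma volume_sameSideDescent {δ Δ : ℝ} (hΔ0 : 0 < |Δ|) (hΔ : |Δ| < δ) :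
    volume (sameSideDescent δ Δ) = ENNReal.ofReal ((δ + |Δ|) / 2) := by
  rcases lt_or_gt_of_ne (abs_pos.1 hΔ0) with hneg | hpos
  · rw [abs_of_neg hneg] at hΔ ⊢
    have hreflect := sameSideDescent_neg δ (-Δ)
    rw [neg_neg] at hreflect
    rw [hreflect, Measure.measure_neg,
      sameSideDescent_eq_Ico (neg_pos.2 hneg) hΔ, Real.volume_Ico, sub_zero]
  · rw [abs_of_pos hpos] at hΔ ⊢
    rw [sameSideDescent_eq_Ico hpos hΔ, Real.volume_Ico, sub_zero]

lemma uniformIcc_apply_of_subset {a b : ℝ} {s : Set ℝ} (hs : s ⊆ Set.Icc a b) :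
    uniformIcc a b s = (ENNReal.ofReal (b - a))⁻¹ * volume s := by
  rw [uniformIcc, Measure.smul_apply, Measure.restrict_eq_self _ hs, smul_eq_mul]

theorem stmt10_general {Ω : Type*} [MeasurableSpace Ω] (P : Measure Ω)
    (δ Δ : ℝ) (hΔ0 : 0 < |Δ|) (hΔ : |Δ| < δ)
    (V : Ω → ℝ) (hVmeas : Measurable V)
    (hVunif : Measure.map V P = uniformIcc (-δ) δ) :
    P {ω | |V ω| + |Δ - V ω| < δ ∧ 0 ≤ V ω * Δ} =
      ENNReal.ofReal ((δ + |Δ|) / (4 * δ)) := by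
  have hδ : 0 < δ := hΔ0.trans hΔ
  change P (V ⁻¹' sameSideDescent δ Δ) = _
  rw [← Measure.map_apply hVmeas (measurableSet_sameSideDescent δ Δ), hVunif,
    uniformIcc_apply_of_subset (sameSideDescent_subset_Icc δ Δ),
    volume_sameSideDescent hΔ0 hΔ, ← ENNReal.ofReal_inv_of_pos (by linarith),
    ← ENNReal.ofReal_mul (inv_nonneg.2 (by linarith))]
  congr 1
  field_simp
  ring

/-- For `0 < |Δ| < δ` and `V` uniform on `[-δ, δ]`,
`ℙ(|V| + |Δ - V| < δ and V·Δ ≥ 0) = (δ + |Δ|)/(4δ)`. -/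
theorem stmt10 {Ω : Type*} [MeasurableSpace Ω] (P : Measure Ω) [IsProbabilityMeasure P]
    (δ Δ : ℝ) (hδ : 0 < δ) (hΔ0 : 0 < |Δ|) (hΔ : |Δ| < δ)
    (V : Ω → ℝ) (hVmeas : Measurable V)
    (hVunif : Measure.map V P = uniformIcc (-δ) δ) :
    P {ω | |V ω| + |Δ - V ω| < δ ∧ 0 ≤ V ω * Δ} =
      ENNReal.ofReal ((δ + |Δ|) / (4 * δ)) :=
  stmt10_general P δ Δ hΔ0 hΔ V hVmeas hVunif
end

section
/- Let δ > 0 and let Δ be a real number with 0 < |Δ| < δ. If V is a real random variable uniformly distributed on [−δ, δ], then ℙ( |V| + |Δ − V| < δ and V·Δ < 0 ) = (δ − |Δ|)/(4δ). -/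
open MeasureTheory

lemma uniformIcc_Ioo (δ a b : ℝ) (hδ : 0 < δ)
    (hsub : Set.Ioo a b ⊆ Set.Icc (-δ) δ) :
    uniformIcc (-δ) δ (Set.Ioo a b) = ENNReal.ofReal ((b - a) / (2 * δ)) := by
  have h2δ : (0:ℝ) < 2 * δ := by linarith
  rw [uniformIcc, Measure.smul_apply, Measure.restrict_apply measurableSet_Ioo,
    Set.inter_eq_left.mpr hsub, Real.volume_Ioo, smul_eq_mul,
    show δ - -δ = 2 * δ by ring,
    ← ENNReal.ofReal_inv_of_pos h2δ,
    ← ENNReal.ofReal_mul (by positivity)]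
  rw [div_eq_mul_inv, mul_comm]

/-- For `0 < |Δ| < δ` and `V` uniform on `[-δ, δ]`,
`ℙ(|V| + |Δ - V| < δ and V·Δ < 0) = (δ - |Δ|)/(4δ)`. -/
theorem stmt11 {Ω : Type*} [MeasurableSpace Ω] (P : Measure Ω) [IsProbabilityMeasure P]
    (δ Δ : ℝ) (hδ : 0 < δ) (hΔ0 : 0 < |Δ|) (hΔ : |Δ| < δ)
    (V : Ω → ℝ) (hVmeas : Measurable V)
    (hVunif : Measure.map V P = uniformIcc (-δ) δ) :
    P {ω | |V ω| + |Δ - V ω| < δ ∧ V ω * Δ < 0} =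
      ENNReal.ofReal ((δ - |Δ|) / (4 * δ)) := by
  have hΔne : Δ ≠ 0 := by
    intro h; rw [h, abs_zero] at hΔ0; exact lt_irrefl _ hΔ0
  rcases lt_or_gt_of_ne hΔne with hneg | hpos
  · -- Δ < 0 : set is Ioo 0 ((δ + Δ)/2)
    have habs : |Δ| = -Δ := abs_of_neg hneg
    have hset : {ω | |V ω| + |Δ - V ω| < δ ∧ V ω * Δ < 0} =
        V ⁻¹' (Set.Ioo 0 ((δ + Δ)/2)) := by
      ext ω
      simp only [Set.mem_setOf_eq, Set.mem_preimage, Set.mem_Ioo]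
      constructor
      · rintro ⟨h1, h2⟩
        have hv : 0 < V ω := by nlinarith
        rw [abs_of_pos hv, abs_of_neg (by linarith : Δ - V ω < 0)] at h1
        constructor
        · exact hv
        · linarith
      · rintro ⟨h1, h2⟩
        rw [abs_of_pos h1, abs_of_neg (by linarith : Δ - V ω < 0)]
        constructor
        · linarith
        · nlinarith
    rw [hset, ← Measure.map_apply hVmeas measurableSet_Ioo, hVunif,
      uniformIcc_Ioo δ _ _ hδ (by
        intro x hx
        simp only [Set.mem_Ioo] at hx
        constructor <;> [linarith; linarith])]
    congr 1
    rw [habs]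
    rw [div_eq_div_iff (by positivity) (by positivity)]
    ring
  · -- Δ > 0 : set is Ioo ((Δ - δ)/2) 0
    have habs : |Δ| = Δ := abs_of_pos hpos
    have hset : {ω | |V ω| + |Δ - V ω| < δ ∧ V ω * Δ < 0} =
        V ⁻¹' (Set.Ioo ((Δ - δ)/2) 0) := by
      ext ω
      simp only [Set.mem_setOf_eq, Set.mem_preimage, Set.mem_Ioo]
      constructor
      · rintro ⟨h1, h2⟩
        have hv : V ω < 0 := by nlinarith
        rw [abs_of_neg hv, abs_of_pos (by linarith : 0 < Δ - V ω)] at h1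
        constructor
        · linarith
        · exact hv
      · rintro ⟨h1, h2⟩
        rw [abs_of_neg h2, abs_of_pos (by linarith : 0 < Δ - V ω)]
        constructor
        · linarith
        · nlinarith
    rw [hset, ← Measure.map_apply hVmeas measurableSet_Ioo, hVunif,
      uniformIcc_Ioo δ _ _ hδ (by
        intro x hx
        simp only [Set.mem_Ioo] at hx
        constructor <;> [linarith; linarith])]
    congr 1
    rw [habs]
    rw [div_eq_div_iff (by positivity) (by positivity)]
    ring
end
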